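/- Let A be a unital C*-algebra with triple product {x,y,z} = (x y* z + z y* x)/2, and let δ : A → A be a triple derivation with δ(1) = 0. Then δ is a *-derivation: δ(ab) = δ(a)b + aδ(b) and δ(a*) = δ(a)* for all a,b in A. -/

import Mathlib

/-!
Evaluating the triple identity at `(1, a, 1)` gives `δ a⋆ = (δ a)⋆`, and then at `(u, x⋆, u)` shows
that `δ` is a Jordan triple derivation: `δ (u x u) = δu x u + u δx u + u x δu`.
A C⋆-algebra is semiprime (`t t⋆ t = 0` forces `t = 0` by the C⋆-identity), and on a
2-torsion-free semiprime ring Brešar's argument turns every Jordan triple derivation into a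
derivation: the defect `E = δ(ab) - δa b - a δb` satisfies `E x [a,b] + [a,b] x E = 0`, which
semiprimeness upgrades to `E(a,b) x [c,d] = 0` for all arguments; applying `δ` once more gives
`E x E y E = 0`, hence `E = 0`.
-/

noncomputable def tp {A : Type*} [NormedRing A] [StarRing A] [NormedAlgebra ℂ A]
    (x y z : A) : A :=
  (2:ℂ)⁻¹ • (x * star y * z + z * star y * x)

class IsSemiprimeRing (R : Type*) [Ring R] : Prop where
  eq_zero_of_forall_mul_mul_self : ∀ t : R, (∀ x, t * x * t = 0) → t = 0

namespace IsSemiprimeRing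

variable {R : Type*} [Ring R] [IsSemiprimeRing R]

theorem mul_mul_eq_zero_swap {u v : R} (h : ∀ x, u * x * v = 0) (x : R) : v * x * u = 0 :=
  eq_zero_of_forall_mul_mul_self _ fun y => by
    calc v * x * u * y * (v * x * u) = v * x * (u * y * v) * (x * u) := by noncomm_ring
    _ = 0 := by rw [h, mul_zero, zero_mul]

theorem mul_mul_eq_zero_of_add_eq_zero [IsAddTorsionFree R] {u v : R}
    (h : ∀ x, u * x * v + v * x * u = 0) (x : R) : u * x * v = 0 := by
  have hv : ∀ x y, v * x * (u * y * v) = 0 := fun x y => by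
    refine (nsmul_eq_zero_iff_right two_ne_zero).mp ?_
    linear_combination (norm := noncomm_ring)
      h x * (y * v) + v * x * h y - h (x * v * y)
  refine eq_zero_of_forall_mul_mul_self _ fun y => ?_
  calc u * x * v * y * (u * x * v) = u * x * (v * y * (u * x * v)) := by noncomm_ring
  _ = 0 := by rw [hv, mul_zero]

-- Linearizing at `a + b` gives `f a x g b = -(f b x g a)`, and `g a y f a = 0` kills `t y t`.
theorem mul_mul_eq_zero_of_additive (f g : R →+ R) (h : ∀ a x, f a * x * g a = 0)
    (a b x : R) : f a * x * g b = 0 := by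
  have hcross : ∀ y, f a * y * g b + f b * y * g a = 0 := fun y => by
    linear_combination (norm := skip) h (a + b) y - h a y - h b y
    simp only [map_add]
    noncomm_ring
  refine eq_zero_of_forall_mul_mul_self _ fun y => ?_
  calc f a * x * g b * y * (f a * x * g b)
      = -(f b * x * g a) * y * (f a * x * g b) := by rw [← eq_neg_of_add_eq_zero_left (hcross x)]
  _ = -(f b * x * (g a * y * f a) * (x * g b)) := by noncomm_ring
  _ = 0 := by rw [mul_mul_eq_zero_swap (h a), mul_zero, zero_mul, neg_zero]

theorem mul_mul_eq_zero_of_biadditive (f g : R →+ R →+ R)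
    (h : ∀ a b x, f a b * x * g a b = 0) (a b c d x : R) : f a b * x * g c d = 0 :=
  mul_mul_eq_zero_of_additive (f a) (g c)
    (fun b x => mul_mul_eq_zero_of_additive (f.flip b) (g.flip b) (fun a x => h a b x) a c x)
    b d x

end IsSemiprimeRing

section JordanTriple

variable {R : Type*} [Ring R]

def IsJordanTripleDerivation (δ : R →+ R) : Prop :=
  ∀ u x, δ (u * x * u) = δ u * x * u + u * δ x * u + u * x * δ u

def derivationDefect (δ : R →+ R) : R →+ R →+ R :=
  AddMonoidHom.mul.compr₂ δ - AddMonoidHom.mul.comp δ - AddMonoidHom.mul.compl₂ δ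

@[simp]
theorem derivationDefect_apply (δ : R →+ R) (a b : R) :
    derivationDefect δ a b = δ (a * b) - δ a * b - a * δ b := rfl

def commutatorHom : R →+ R →+ R := AddMonoidHom.mul - AddMonoidHom.mul.flip

@[simp]
theorem commutatorHom_apply (a b : R) : commutatorHom a b = a * b - b * a := rfl

namespace IsJordanTripleDerivation

variable {δ : R →+ R}

theorem map_mul_mul_add_mul_mul (hδ : IsJordanTripleDerivation δ) (u v x : R) :
    δ (u * x * v + v * x * u) = δ u * x * v + u * δ x * v + u * x * δ v
      + δ v * x * u + v * δ x * u + v * x * δ u := by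
  have h := hδ (u + v) x
  have hsplit : δ ((u + v) * x * (u + v))
      = δ (u * x * v + v * x * u) + δ (u * x * u) + δ (v * x * v) := by
    rw [← map_add, ← map_add]; congr 1; noncomm_ring
  rw [hsplit, hδ u x, hδ v x, map_add δ u v] at h
  linear_combination (norm := noncomm_ring) h

variable [IsAddTorsionFree R]

theorem map_one (hδ : IsJordanTripleDerivation δ) : δ 1 = 0 := by
  refine (nsmul_eq_zero_iff_right two_ne_zero).mp ?_
  linear_combination (norm := noncomm_ring) -hδ 1 1

theorem map_mul_add_mul (hδ : IsJordanTripleDerivation δ) (a b : R) :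
    δ (a * b + b * a) = δ a * b + a * δ b + δ b * a + b * δ a := by
  simpa [hδ.map_one, add_assoc] using hδ.map_mul_mul_add_mul_mul a b 1

theorem map_commutator (hδ : IsJordanTripleDerivation δ) (a b : R) :
    δ (commutatorHom a b) = 2 • derivationDefect δ a b
      + commutatorHom (δ a) b + commutatorHom a (δ b) := by
  have h := hδ.map_mul_add_mul a b
  rw [map_add] at h
  simp only [commutatorHom_apply, derivationDefect_apply, map_sub]
  linear_combination (norm := noncomm_ring) -h

-- Compare the expansions of `δ (ab x ba + ba x ab)` as a Jordan triple product in `ab, ba`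
-- and as `δ (a (bxb) a + b (axa) b)`.
theorem defect_mul_commutator_add (hδ : IsJordanTripleDerivation δ) (a b x : R) :
    derivationDefect δ a b * x * commutatorHom a b
      + commutatorHom a b * x * derivationDefect δ a b = 0 := by
  have h₁ := hδ.map_mul_mul_add_mul_mul (a * b) (b * a) x
  rw [show a * b * x * (b * a) + b * a * x * (a * b) = a * (b * x * b) * a + b * (a * x * a) * b
    by noncomm_ring, map_add, hδ a (b * x * b), hδ b (a * x * a), hδ a x, hδ b x] at h₁
  have h₂ := hδ.map_mul_add_mul a b
  rw [map_add] at h₂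
  simp only [commutatorHom_apply, derivationDefect_apply]
  linear_combination (norm := noncomm_ring) h₁ + (a * b) * x * h₂ + h₂ * x * (a * b)

open IsSemiprimeRing

variable [IsSemiprimeRing R]

theorem defect_mul_commutator (hδ : IsJordanTripleDerivation δ) (a b c d x : R) :
    derivationDefect δ a b * x * commutatorHom c d = 0 :=
  mul_mul_eq_zero_of_biadditive _ _
    (fun a b => mul_mul_eq_zero_of_add_eq_zero (hδ.defect_mul_commutator_add a b)) a b c d x

theorem commutator_mul_defect (hδ : IsJordanTripleDerivation δ) (a b c d x : R) :
    commutatorHom c d * x * derivationDefect δ a b = 0 :=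
  mul_mul_eq_zero_swap (hδ.defect_mul_commutator a b c d) x

-- Apply `δ` to `E x' C + C x' E = 0` with `x' = x E y`: since `δ C = 2E + (commutators)` and `E`
-- annihilates commutators on both sides, only `4 E x E y E` survives.
theorem defect_mul_defect_mul_defect (hδ : IsJordanTripleDerivation δ) (a b x y : R) :
    derivationDefect δ a b * x * derivationDefect δ a b * y * derivationDefect δ a b = 0 := by
  have hEC := hδ.defect_mul_commutator a b
  have hCE := hδ.commutator_mul_defect a b
  have h := hδ.map_mul_mul_add_mul_mul (derivationDefect δ a b) (commutatorHom a b)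
    (x * derivationDefect δ a b * y)
  rw [hδ.defect_mul_commutator_add, map_zero, hδ.map_commutator] at h
  have hmid := hδ.defect_mul_commutator_add a b (δ (x * derivationDefect δ a b * y))
  generalize derivationDefect δ a b = E at *
  have key : (4 : ℕ) • (E * x * E * y * E) + δ E * x * (E * y * commutatorHom a b)
      + commutatorHom a b * x * E * y * δ E
      + E * x * (E * y * commutatorHom (δ a) b) + E * x * (E * y * commutatorHom a (δ b))
      + commutatorHom (δ a) b * x * E * (y * E) + commutatorHom a (δ b) * x * E * (y * E) = 0 := by
    linear_combination (norm := noncomm_ring) -h - hmid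
  simp only [hEC, hCE, mul_zero, zero_mul, add_zero] at key
  exact (nsmul_eq_zero_iff_right four_ne_zero).mp key

theorem derivationDefect_eq_zero (hδ : IsJordanTripleDerivation δ) (a b : R) :
    derivationDefect δ a b = 0 := by
  refine eq_zero_of_forall_mul_mul_self _ fun x => eq_zero_of_forall_mul_mul_self _ fun y => ?_
  calc _ = derivationDefect δ a b * x * derivationDefect δ a b * y * derivationDefect δ a b
        * (x * derivationDefect δ a b) := by noncomm_ring
  _ = 0 := by rw [hδ.defect_mul_defect_mul_defect, zero_mul]

theorem map_mul (hδ : IsJordanTripleDerivation δ) (a b : R) : δ (a * b) = δ a * b + a * δ b := by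
  rw [← sub_eq_zero, ← sub_sub, ← derivationDefect_apply, hδ.derivationDefect_eq_zero]

end IsJordanTripleDerivation

end JordanTriple

instance CStarRing.isSemiprimeRing {A : Type*} [NormedRing A] [StarRing A] [CStarRing A] :
    IsSemiprimeRing A where
  eq_zero_of_forall_mul_mul_self t ht := by
    have h : ‖t‖ * ‖t‖ * (‖t‖ * ‖t‖) = 0 := by
      calc ‖t‖ * ‖t‖ * (‖t‖ * ‖t‖) = ‖star (t * star t) * (t * star t)‖ := by
            rw [CStarRing.norm_star_mul_self, CStarRing.norm_self_mul_star]
      _ = ‖t * star t * t * star t‖ := by rw [star_mul, star_star, ← mul_assoc]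
      _ = 0 := by rw [ht, zero_mul, norm_zero]
    simpa using h

section TripleProduct

variable {A : Type*} [NormedRing A] [StarRing A] [NormedAlgebra ℂ A]

theorem tp_self (x y : A) : tp x y x = x * star y * x := by
  rw [tp, ← two_smul ℂ, smul_smul, inv_mul_cancel₀ two_ne_zero, one_smul]

theorem tp_add_tp_comm (x y z : A) : tp x y z + tp z y x = x * star y * z + z * star y * x := by
  rw [tp, tp, ← smul_add, add_comm (z * star y * x), ← two_smul ℂ, smul_smul,
    inv_mul_cancel₀ two_ne_zero, one_smul]

def IsTripleDerivation (δ : A →ₗ[ℂ] A) : Prop :=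
  ∀ x y z, δ (tp x y z) = tp (δ x) y z + tp x (δ y) z + tp x y (δ z)

variable {δ : A →ₗ[ℂ] A}

theorem IsTripleDerivation.map_star (hδ : IsTripleDerivation δ) (h1 : δ 1 = 0) (a : A) :
    δ (star a) = star (δ a) := by
  have h := hδ 1 a 1
  rw [tp_self 1 a, tp_self 1 (δ a), h1] at h
  simpa [tp] using h

theorem IsTripleDerivation.isJordanTripleDerivation (hδ : IsTripleDerivation δ) (h1 : δ 1 = 0) :
    IsJordanTripleDerivation (δ : A →+ A) := fun u x => by
  have h := hδ u (star x) u
  rw [tp_self, tp_self, hδ.map_star h1, star_star, star_star, add_right_comm,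
    tp_add_tp_comm, star_star] at h
  simpa [add_right_comm] using h

end TripleProduct

theorem stmt8_general {A : Type*} [NormedRing A] [StarRing A] [CStarRing A]
    [NormedAlgebra ℂ A] (δ : A →ₗ[ℂ] A) (hδ : ∀ x y z : A, δ (tp x y z) = tp (δ x) y z + tp x (δ y) z + tp x y (δ z)) (h1 : δ 1 = 0) :
    (∀ a b : A, δ (a * b) = δ a * b + a * δ b) ∧ (∀ a : A, δ (star a) = star (δ a)) := by
  have : IsAddTorsionFree A := .of_isTorsionFree ℂ A
  exact ⟨(IsTripleDerivation.isJordanTripleDerivation hδ h1).map_mul,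
    IsTripleDerivation.map_star hδ h1⟩

theorem stmt8 {A : Type*} [NormedRing A] [StarRing A] [CStarRing A]
    [NormedAlgebra ℂ A] [StarModule ℂ A] [CompleteSpace A] (δ : A →ₗ[ℂ] A) (hδ : ∀ x y z : A, δ (tp x y z) = tp (δ x) y z + tp x (δ y) z + tp x y (δ z)) (h1 : δ 1 = 0) :
    (∀ a b : A, δ (a * b) = δ a * b + a * δ b) ∧ (∀ a : A, δ (star a) = star (δ a)) :=
  stmt8_general δ hδ h1
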